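/- Let X and Y be Noetherian schemes of finite Krull dimension whose underlying spaces are catenary, and let f : X → Y be a flat morphism such that for every point y ∈ Y the fiber X_y = f⁻¹(y) is irreducible. Then f is weakly catenarious. -/

import Mathlib

/-!
A flat morphism is generalizing (going down), so a chain of irreducible closed subsets of `Y`
rising from `cl(f(T))` towards `cl{y}` lifts, generic point by generic point, to a chain of the
same length in `X` rising from `T` and ending inside the closure of the fiber over `y`. As the
fiber is irreducible, its component `T'` is the whole fiber, and therefore
`codim(cl(f(T)), cl(f(T'))) ≤ codim(cl(f(T)), cl{y}) ≤ codim(T, cl(T')) = 1`.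
-/

open TopologicalSpace

section TopDefs

variable {α β : Type*} [TopologicalSpace α] [TopologicalSpace β]

/-- The closure of a point, as an irreducible closed subset. -/
noncomputable def ptIC (x : α) : IrreducibleCloseds α :=
  ⟨closure {x}, isIrreducible_singleton.closure, isClosed_closure⟩

/-- `codim(T, T')`: the supremum of lengths `n` of chains
`T = T₀ ⊊ T₁ ⊊ ⋯ ⊊ Tₙ ⊆ T'` of irreducible closed subsets. -/
noncomputable def icCodim (T T' : IrreducibleCloseds α) : ℕ∞ :=
  Set.chainHeight {Z : IrreducibleCloseds α | T < Z ∧ Z ≤ T'} (· < ·)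

/-- The codimension of an irreducible closed subset in the whole space. -/
noncomputable def spCodim (T : IrreducibleCloseds α) : ℕ∞ :=
  Set.chainHeight {Z : IrreducibleCloseds α | T < Z} (· < ·)

/-- The closure of the image of an irreducible closed subset under a continuous map,
as an irreducible closed subset. -/
noncomputable def imageIC (f : α → β) (hf : Continuous f) (T : IrreducibleCloseds α) :
    IrreducibleCloseds β :=
  ⟨closure (f '' (T : Set α)),
    (T.isIrreducible.image f hf.continuousOn).closure, isClosed_closure⟩

/-- `p` is a maximal chain of irreducible closed subsets starting with `T` and
ending with `T'`: no further irreducible closed subset can be inserted. -/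
def IsMaxChainBtw (T T' : IrreducibleCloseds α) (p : LTSeries (IrreducibleCloseds α)) : Prop :=
  p.head = T ∧ p.last = T' ∧
    ∀ i : Fin p.length, ∀ Z : IrreducibleCloseds α,
      ¬ (p.toFun i.castSucc < Z ∧ Z < p.toFun i.succ)

/-- A topological space is catenary if for all irreducible closed subsets `T ⊆ T'`,
every maximal chain of irreducible closed subsets starting with `T` and ending with `T'`
has the same length. -/
def CatenarySpace (α : Type*) [TopologicalSpace α] : Prop :=
  ∀ T T' : IrreducibleCloseds α, T ≤ T' →
    ∀ p q : LTSeries (IrreducibleCloseds α),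
      IsMaxChainBtw T T' p → IsMaxChainBtw T T' q → p.length = q.length

/-- A continuous map is catenarious if
`codim(T, T') ≥ codim(cl(f(T)), cl(f(T')))` for all irreducible closed `T ⊆ T'`. -/
def Catenarious (f : α → β) (hf : Continuous f) : Prop :=
  ∀ T T' : IrreducibleCloseds α, T ≤ T' →
    icCodim (imageIC f hf T) (imageIC f hf T') ≤ icCodim T T'

/-- `T'` is an irreducible component of the subset `s`:
a maximal irreducible subset of `s`. -/
def IsIrredComponentOf (T' s : Set α) : Prop :=
  T' ⊆ s ∧ IsIrreducible T' ∧ ∀ W : Set α, IsIrreducible W → T' ⊆ W → W ⊆ s → W = T'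

/-- A continuous map `f` is weakly catenarious if for every point `y`, every irreducible
component `T'` of `f ⁻¹ y`, and every irreducible closed `T ⊆ cl(T')` with
`codim(T, cl(T')) = 1`, one has `codim(cl(f(T)), cl(f(T'))) ≤ 1`. -/
def WeaklyCatenarious (f : α → β) (hf : Continuous f) : Prop :=
  ∀ y : β, ∀ T' : Set α, ∀ h : IsIrredComponentOf T' (f ⁻¹' {y}),
    ∀ T : IrreducibleCloseds α, (T : Set α) ⊆ closure T' →
      icCodim T ⟨closure T', h.2.1.closure, isClosed_closure⟩ = 1 →
      icCodim (imageIC f hf T)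
        ⟨closure (f '' T'), (h.2.1.image f hf.continuousOn).closure, isClosed_closure⟩ ≤ 1

/-- A space is biequidimensional if all maximal chains of irreducible closed subsets
have the same length. -/
def BiequidimensionalSpace (α : Type*) [TopologicalSpace α] : Prop :=
  ∀ p q : LTSeries (IrreducibleCloseds α),
    (IsMin p.head ∧ IsMax p.last ∧ ∀ i : Fin p.length, ∀ Z : IrreducibleCloseds α,
      ¬ (p.toFun i.castSucc < Z ∧ Z < p.toFun i.succ)) →
    (IsMin q.head ∧ IsMax q.last ∧ ∀ i : Fin q.length, ∀ Z : IrreducibleCloseds α,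
      ¬ (q.toFun i.castSucc < Z ∧ Z < q.toFun i.succ)) →
    p.length = q.length

/-- `x` is a generic point of (an irreducible component of) the fiber `f ⁻¹ y`:
it lies in the fiber and admits no strict generalization inside the fiber. -/
def IsFiberGeneric (f : α → β) (y : β) (x : α) : Prop :=
  f x = y ∧ ∀ z : α, f z = y → x ∈ closure {z} → z ∈ closure {x}

end TopDefs

/-- A morphism of schemes is flat if for every point the induced map of local rings
(stalks) is flat. -/
def SchemeHomFlat {X Y : AlgebraicGeometry.Scheme} (f : X ⟶ Y) : Prop :=
  ∀ x : X, RingHom.Flat (f.stalkMap x).hom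

section Chains

variable {P : Type*} [Preorder P]

theorem IsChain.exists_forall_lt_of_finite {s : Set P} (hc : IsChain (· < ·) s)
    (hfin : s.Finite) (hne : s.Nonempty) : ∃ m ∈ s, ∀ c ∈ s, c ≠ m → m < c := by
  obtain ⟨m, hm⟩ := hfin.exists_minimal hne
  exact ⟨m, hm.prop, fun c hc' hcm =>
    (hc hm.prop hc' (Ne.symm hcm)).resolve_right (hm.not_lt hc')⟩

open Set in
/-- Removing the least element `c` of a chain in `Ioc a b` leaves a chain in `Ioc c b`;
conversely a chain in `Ioc c b` extends by `c`. -/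
theorem Set.natCast_add_one_le_chainHeight_Ioc_iff (n : ℕ) (a b : P) :
    ((n + 1 : ℕ) : ℕ∞) ≤ (Ioc a b).chainHeight (· < ·) ↔
      ∃ c ∈ Ioc a b, (n : ℕ∞) ≤ (Ioc c b).chainHeight (· < ·) := by
  constructor
  · intro h
    obtain ⟨t, hts, hcard, hc⟩ := exists_isChain_of_le_chainHeight _ h
    have hfin : t.Finite := finite_of_encard_eq_coe hcard
    have hne : t.Nonempty := by
      rw [← encard_pos, hcard]; exact_mod_cast Nat.succ_pos n
    obtain ⟨m, hmt, hleast⟩ := hc.exists_forall_lt_of_finite hfin hne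
    refine ⟨m, hts hmt, ?_⟩
    have hcard' : (t \ {m}).encard = n := by
      have := encard_sdiff_singleton_add_one hmt
      rw [hcard, Nat.cast_succ] at this
      exact WithTop.add_right_cancel ENat.one_ne_top this
    rw [← hcard']
    refine encard_le_chainHeight_of_isChain _ _ ?_ (hc.mono sdiff_subset)
    rintro c ⟨hct, hcm⟩
    exact ⟨hleast c hct hcm, (hts hct).2⟩
  · rintro ⟨c, hc, h⟩
    obtain ⟨t, hts, hcard, hchain⟩ := exists_isChain_of_le_chainHeight _ h
    have hct : c ∉ t := fun hct => (hts hct).1.false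
    calc ((n + 1 : ℕ) : ℕ∞) = (insert c t).encard := by
          rw [encard_insert_of_notMem hct, hcard]; rfl
      _ ≤ _ := by
        refine encard_le_chainHeight_of_isChain _ _ ?_
          (hchain.insert fun d hd _ => Or.inl (hts hd).1)
        rintro d (rfl | hd)
        · exact hc
        · exact ⟨hc.1.trans (hts hd).1, (hts hd).2⟩

end Chains

section Topology

variable {α β : Type*} [TopologicalSpace α] [TopologicalSpace β]

theorem natCast_add_one_le_icCodim_iff (n : ℕ) (T T' : IrreducibleCloseds α) :
    ((n + 1 : ℕ) : ℕ∞) ≤ icCodim T T' ↔ ∃ Z, (T < Z ∧ Z ≤ T') ∧ (n : ℕ∞) ≤ icCodim Z T' :=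
  Set.natCast_add_one_le_chainHeight_Ioc_iff n T T'

theorem icCodim_mono_right {T T₁ T₂ : IrreducibleCloseds α} (h : T₁ ≤ T₂) :
    icCodim T T₁ ≤ icCodim T T₂ :=
  Set.chainHeight_mono _ _ _ fun _ hZ => ⟨hZ.1, hZ.2.trans h⟩

theorem ptIC_le_ptIC_iff {x y : α} : ptIC x ≤ ptIC y ↔ y ⤳ x :=
  specializes_iff_closure_subset.symm

theorem ptIC_le_iff {x : α} {S : IrreducibleCloseds α} : ptIC x ≤ S ↔ x ∈ S :=
  S.isClosed.closure_subset_iff.trans Set.singleton_subset_iff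

theorem exists_ptIC_eq [QuasiSober α] (T : IrreducibleCloseds α) : ∃ x, ptIC x = T :=
  let ⟨x, hx⟩ := QuasiSober.sober T.isIrreducible T.isClosed
  ⟨x, IrreducibleCloseds.ext hx⟩

theorem imageIC_ptIC {f : α → β} (hf : Continuous f) (x : α) :
    imageIC f hf (ptIC x) = ptIC (f x) := by
  refine IrreducibleCloseds.ext ?_
  change closure (f '' closure {x}) = closure {f x}
  rw [closure_image_closure hf, Set.image_singleton]

/-- Chains above `f x` lift one step at a time along the generalizing map `f`; the lifts stay
in `S` because `z` itself lifts from each of them into the fiber over `z`. -/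
theorem icCodim_ptIC_le_of_generalizingMap [QuasiSober β] {f : α → β} (hf : Continuous f)
    (hgen : GeneralizingMap f) {z : β} {S : IrreducibleCloseds α} (hS : f ⁻¹' {z} ⊆ S) (x : α) :
    icCodim (ptIC (f x)) (ptIC z) ≤ icCodim (ptIC x) S := by
  refine ENat.forall_natCast_le_iff_le.1 fun n => ?_
  induction n generalizing x with
  | zero => simp
  | succ n ih =>
    intro h
    obtain ⟨Z, ⟨hxZ, hZz⟩, hn⟩ := (natCast_add_one_le_icCodim_iff n _ _).1 h
    obtain ⟨z₁, rfl⟩ := exists_ptIC_eq Z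
    obtain ⟨x₁, hx₁x, rfl⟩ := hgen (ptIC_le_ptIC_iff.1 hxZ.le)
    obtain ⟨x', hx'x₁, hx'z⟩ := hgen (ptIC_le_ptIC_iff.1 hZz)
    have hx_lt : ptIC x < ptIC x₁ := by
      refine lt_of_le_not_ge (ptIC_le_ptIC_iff.2 hx₁x) fun hle => hxZ.not_ge ?_
      exact ptIC_le_ptIC_iff.2 ((ptIC_le_ptIC_iff.1 hle).map hf)
    have hx₁S : ptIC x₁ ≤ S := (ptIC_le_ptIC_iff.2 hx'x₁).trans (ptIC_le_iff.2 (hS hx'z))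
    exact (natCast_add_one_le_icCodim_iff n _ _).2 ⟨ptIC x₁, ⟨hx_lt, hx₁S⟩, ih x₁ hn⟩

theorem weaklyCatenarious_of_generalizingMap [QuasiSober α] [QuasiSober β] {f : α → β}
    (hf : Continuous f) (hgen : GeneralizingMap f) (hirr : ∀ y, IsIrreducible (f ⁻¹' {y})) :
    WeaklyCatenarious f hf := by
  intro y T' hT' T _ hcodim
  have hfib : f ⁻¹' {y} = T' := hT'.2.2 _ (hirr y) hT'.1 le_rfl
  obtain ⟨t, rfl⟩ := exists_ptIC_eq T
  calc icCodim (imageIC f hf (ptIC t)) _ ≤ icCodim (ptIC (f t)) (ptIC y) := by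
        rw [imageIC_ptIC]
        exact icCodim_mono_right (closure_mono (Set.image_subset_iff.2 hT'.1))
    _ ≤ icCodim (ptIC t) _ := icCodim_ptIC_le_of_generalizingMap hf hgen (hfib ▸ subset_closure) t
    _ = 1 := hcodim

end Topology

theorem SchemeHomFlat.generalizingMap {X Y : AlgebraicGeometry.Scheme} {f : X ⟶ Y}
    (hf : SchemeHomFlat f) : GeneralizingMap f.base :=
  haveI := AlgebraicGeometry.Flat.of_stalkMap f hf
  AlgebraicGeometry.Flat.generalizingMap f

theorem statement6_general {X Y : AlgebraicGeometry.Scheme} (f : X ⟶ Y)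
    (hflat : SchemeHomFlat f)
    (hirr : ∀ y : Y, IsIrreducible (f.base ⁻¹' {y})) :
    WeaklyCatenarious f.base f.base.hom.continuous :=
  weaklyCatenarious_of_generalizingMap _ hflat.generalizingMap hirr

/-- A flat morphism between catenary Noetherian schemes of finite Krull
dimension all of whose fibers are irreducible is weakly catenarious. -/
theorem statement6 {X Y : AlgebraicGeometry.Scheme} (f : X ⟶ Y)
    [AlgebraicGeometry.IsNoetherian X] [AlgebraicGeometry.IsNoetherian Y]
    (hdX : topologicalKrullDim X ≠ ⊤) (hdY : topologicalKrullDim Y ≠ ⊤)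
    (hcX : CatenarySpace X) (hcY : CatenarySpace Y)
    (hflat : SchemeHomFlat f)
    (hirr : ∀ y : Y, IsIrreducible (f.base ⁻¹' {y})) :
    WeaklyCatenarious f.base f.base.hom.continuous :=
  statement6_general f hflat hirr
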